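/- arXiv:2405.09504 — 6 statements merged into one kernel-verified Lean document; each statement's English description precedes it below -/
import Mathlib

section
/- If (R, r) is a recursive F-coalgebra, then (FR, Fr) is also a recursive F-coalgebra. -/
open CategoryTheory

/-- If `(R, r)` is a recursive `F`-coalgebra, then so is `(F R, F r)`. -/
theorem iterate_recursive {𝒞 : Type*} [Category 𝒞] (F : 𝒞 ⥤ 𝒞)
    {R : 𝒞} (r : R ⟶ F.obj R)
    (hrec : ∀ (A : 𝒞) (a : F.obj A ⟶ A), ∃! h : R ⟶ A, h = r ≫ F.map h ≫ a) :
    ∀ (A : 𝒞) (a : F.obj A ⟶ A), ∃! h : F.obj R ⟶ A, h = F.map r ≫ F.map h ≫ a := by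
  intro A a
  obtain ⟨h₀, hh₀, huniq⟩ := hrec A a
  refine ⟨F.map h₀ ≫ a, ?_, ?_⟩
  all_goals simp only []
  · have : F.map r ≫ F.map (F.map h₀ ≫ a) ≫ a
        = F.map (r ≫ F.map h₀ ≫ a) ≫ a := by
      simp [F.map_comp]
    rw [this, ← hh₀]
  · intro g hg
    have key : r ≫ g = h₀ := by
      apply huniq
      conv_lhs => rw [hg]
      simp [F.map_comp]
    rw [hg]
    have : F.map r ≫ F.map g = F.map (r ≫ g) := by simp [F.map_comp]
    rw [reassoc_of% this, key]
end

section
/- Let (R,r) and (B,b) be F-coalgebras with coalgebra morphisms h : (R,r) → (B,b) and g : (B,b) → (FR, Fr) such that b = Fh ∘ g. If (R,r) is recursive, then (B,b) is recursive. -/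
open CategoryTheory

/-- Sandwich lemma: given coalgebra morphisms `h : (R,r) → (B,b)` and
`g : (B,b) → (FR,Fr)` with `b = F h ∘ g`, recursiveness of `(R,r)` implies
recursiveness of `(B,b)`. -/
theorem sandwich_recursive {𝒞 : Type*} [Category 𝒞] (F : 𝒞 ⥤ 𝒞)
    {R B : 𝒞} (r : R ⟶ F.obj R) (b : B ⟶ F.obj B)
    (h : R ⟶ B) (hh : h ≫ b = r ≫ F.map h)
    (g : B ⟶ F.obj R) (hg : g ≫ F.map r = b ≫ F.map g)
    (hfact : b = g ≫ F.map h)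
    (hrec : ∀ (A : 𝒞) (a : F.obj A ⟶ A), ∃! k : R ⟶ A, k = r ≫ F.map k ≫ a) :
    ∀ (A : 𝒞) (a : F.obj A ⟶ A), ∃! k : B ⟶ A, k = b ≫ F.map k ≫ a := by
  intro A a
  obtain ⟨e, he, heu⟩ := hrec A a
  refine ⟨g ≫ F.map e ≫ a, ?_, ?_⟩
  · calc g ≫ F.map e ≫ a
        = g ≫ F.map (r ≫ F.map e ≫ a) ≫ a := by rw [← he]
      _ = (g ≫ F.map r) ≫ F.map (F.map e ≫ a) ≫ a := by
          simp [F.map_comp]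
      _ = b ≫ F.map (g ≫ F.map e ≫ a) ≫ a := by
          rw [hg]; simp [F.map_comp]
  · intro k hk
    have hhk : h ≫ k = e := by
      apply heu
      calc h ≫ k = h ≫ b ≫ F.map k ≫ a := by rw [← hk]
        _ = (h ≫ b) ≫ F.map k ≫ a := by simp
        _ = r ≫ F.map (h ≫ k) ≫ a := by rw [hh]; simp [F.map_comp]
    calc k = b ≫ F.map k ≫ a := hk
      _ = g ≫ F.map (h ≫ k) ≫ a := by rw [hfact]; simp [F.map_comp]
      _ = g ≫ F.map e ≫ a := by rw [hhk]
end

section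
/- Recursive coalgebras are closed under colimits created by the forgetful functor: if D : D → F-Coalg is a diagram in which every coalgebra Dd is recursive and the colimit (C, c) of D is created from a colimit of V ∘ D in C, then (C, c) is recursive. -/
/-!
Each recursive `D j` has a unique coalgebra-to-algebra morphism `h j` into a given algebra; by
uniqueness these commute with the connecting coalgebra morphisms, so they form a cocone over
`V ∘ D` and induce a map `h` out of the colimit. Since the colimit injections are coalgebra
morphisms, a map out of the colimit is a coalgebra-to-algebra morphism exactly when each of its
restrictions along the injections is one; this shows both that `h` is one and, again by
uniqueness at each `D j`, that it is the only one.
-/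

open CategoryTheory CategoryTheory.Limits

def IsRecursive {𝒞 : Type*} [Category 𝒞] {F : 𝒞 ⥤ 𝒞}
    (R : Endofunctor.Coalgebra F) : Prop :=
  ∀ (A : 𝒞) (a : F.obj A ⟶ A), ∃! h : R.V ⟶ A, h = R.str ≫ F.map h ≫ a

namespace CategoryTheory.Endofunctor.Coalgebra

variable {𝒞 : Type*} [Category 𝒞] {F : 𝒞 ⥤ 𝒞} {A : 𝒞} (a : F.obj A ⟶ A)

def IsCoalgToAlgHom (R : Coalgebra F) (h : R.V ⟶ A) : Prop :=
  h = R.str ≫ F.map h ≫ a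

variable {a}

theorem IsCoalgToAlgHom.comp {R S : Coalgebra F} (f : R ⟶ S) {h : S.V ⟶ A}
    (hh : IsCoalgToAlgHom a S h) : IsCoalgToAlgHom a R (f.f ≫ h) := by
  unfold IsCoalgToAlgHom at *
  conv_lhs => rw [hh]
  rw [F.map_comp, Category.assoc, Hom.h_assoc]

theorem isCoalgToAlgHom_iff_of_isColimit {J : Type*} [Category J] {D : J ⥤ Coalgebra F}
    {cc : Cocone D} (hcc : IsColimit ((forget F).mapCocone cc)) (h : cc.pt.V ⟶ A) :
    IsCoalgToAlgHom a cc.pt h ↔ ∀ j, IsCoalgToAlgHom a (D.obj j) ((cc.ι.app j).f ≫ h) := by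
  refine ⟨fun hh j => hh.comp (cc.ι.app j), fun hh => hcc.hom_ext fun j => ?_⟩
  change (cc.ι.app j).f ≫ h = (cc.ι.app j).f ≫ cc.pt.str ≫ F.map h ≫ a
  rw [hh j, F.map_comp, Category.assoc, Hom.h_assoc]
  rfl

end CategoryTheory.Endofunctor.Coalgebra

open CategoryTheory.Endofunctor.Coalgebra

namespace IsRecursive

variable {𝒞 : Type*} [Category 𝒞] {F : 𝒞 ⥤ 𝒞} {R : Endofunctor.Coalgebra F}
  {A : 𝒞} (a : F.obj A ⟶ A)

noncomputable def lift (hR : IsRecursive R) : R.V ⟶ A :=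
  (hR A a).choose

variable {a}

theorem isCoalgToAlgHom_lift (hR : IsRecursive R) : IsCoalgToAlgHom a R (hR.lift a) :=
  (hR A a).choose_spec.1

theorem eq_lift (hR : IsRecursive R) {h : R.V ⟶ A} (hh : IsCoalgToAlgHom a R h) :
    h = hR.lift a :=
  (hR A a).choose_spec.2 h hh

theorem hom_comp_lift {S : Endofunctor.Coalgebra F} (hR : IsRecursive R) (hS : IsRecursive S)
    (f : R ⟶ S) : f.f ≫ hS.lift a = hR.lift a :=
  hR.eq_lift (hS.isCoalgToAlgHom_lift.comp f)

end IsRecursive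

noncomputable def liftCocone {𝒞 : Type*} [Category 𝒞] {F : 𝒞 ⥤ 𝒞} {J : Type*} [Category J]
    {D : J ⥤ Endofunctor.Coalgebra F} (hrec : ∀ j, IsRecursive (D.obj j))
    {A : 𝒞} (a : F.obj A ⟶ A) : Cocone (D ⋙ Endofunctor.Coalgebra.forget F) where
  pt := A
  ι :=
    { app := fun j => (hrec j).lift a
      naturality := fun j j' f =>
        ((hrec j).hom_comp_lift (hrec j') (D.map f)).trans (Category.comp_id _).symm }

/-- Recursive coalgebras are closed under colimits created by the forgetful functor:
if every coalgebra in the diagram `D` is recursive and the cocone `cc` over `D` is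
mapped by the forgetful functor to a colimit in `𝒞` (i.e. the colimit of `D` is
created from a colimit of `V ∘ D`), then the colimit coalgebra `cc.pt` is recursive. -/
theorem recursive_closed_under_created_colimits {𝒞 : Type*} [Category 𝒞] (F : 𝒞 ⥤ 𝒞)
    {J : Type*} [Category J] (D : J ⥤ Endofunctor.Coalgebra F)
    (cc : Cocone D)
    (hcreated : IsColimit ((Endofunctor.Coalgebra.forget F).mapCocone cc))
    (hrec : ∀ j : J, IsRecursive (D.obj j)) :
    IsRecursive cc.pt := by
  intro A a
  have hfac : ∀ j, (cc.ι.app j).f ≫ hcreated.desc (liftCocone hrec a) = (hrec j).lift a :=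
    hcreated.fac (liftCocone hrec a)
  refine ⟨hcreated.desc (liftCocone hrec a), ?_, fun g hg => hcreated.hom_ext fun j => ?_⟩
  · refine (isCoalgToAlgHom_iff_of_isColimit hcreated _).2 fun j => ?_
    rw [hfac j]
    exact (hrec j).isCoalgToAlgHom_lift
  · exact ((hrec j).eq_lift ((isCoalgToAlgHom_iff_of_isColimit hcreated g).1 hg j)).trans
      (hfac j).symm
end

section
/- A binary relation R on a set X is well-founded if and only if the associated powerset-coalgebra c : X → P(X), defined by c(x) = {y : y R x}, is a recursive coalgebra for the powerset functor. -/
/-- A binary relation `R` on a set `X` is well-founded if and only if the associated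
powerset coalgebra `c : X → P X`, `c x = {y | R y x}`, is recursive: for every
`P`-algebra `(A, a)` there is a unique map `h : X → A` with
`h x = a (h '' {y | R y x})` for all `x`. -/
theorem wellFounded_iff_recursive {X : Type*} (R : X → X → Prop) :
    WellFounded R ↔
      ∀ (A : Type*) (a : Set A → A),
        ∃! h : X → A, ∀ x : X, h x = a (h '' {y : X | R y x}) := by
  classical
  constructor
  · intro hwf A a
    refine ⟨hwf.fix (fun x ih => a (Set.range fun y : {y // R y x} => ih y y.2)), ?_, ?_⟩
    · intro x
      rw [WellFounded.fix_eq]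
      congr 1
      ext z
      constructor
      · rintro ⟨⟨y, hy⟩, rfl⟩; exact ⟨y, hy, rfl⟩
      · rintro ⟨y, hy, rfl⟩; exact ⟨⟨y, hy⟩, rfl⟩
    · intro g hg
      funext x
      induction x using hwf.induction with
      | _ x ih =>
        rw [hg x, WellFounded.fix_eq]
        congr 1
        ext z
        constructor
        · rintro ⟨y, hy, rfl⟩; exact ⟨⟨y, hy⟩, (ih y hy).symm⟩
        · rintro ⟨⟨y, hy⟩, rfl⟩; exact ⟨y, hy, ih y hy⟩
  · intro h
    obtain ⟨f, hf, huniq⟩ := h (ULift Bool)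
      (fun s => if ∀ b ∈ s, b = ULift.up true then ULift.up true else ULift.up false)
    have hacc : (fun x => if Acc R x then ULift.up true else ULift.up false) =
        fun _ => ULift.up (α := Bool) true := by
      rw [huniq (fun x => if Acc R x then ULift.up true else ULift.up false) ?_,
          huniq (fun _ => ULift.up true) ?_]
      · intro x
        simp
      · intro x
        simp only
        have : (∀ b ∈ (fun x => if Acc R x then ULift.up true else ULift.up false)
            '' {y | R y x}, b = ULift.up true) ↔ Acc R x := by
          constructor
          · intro hb
            constructor
            intro y hy
            have := hb _ ⟨y, hy, rfl⟩
            by_contra hny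
            simp [hny] at this
          · intro hx
            rintro b ⟨y, hy, rfl⟩
            simp [hx.inv hy]
        exact (if_congr this rfl rfl).symm
    constructor
    intro x
    have := congrFun hacc x
    by_contra hx
    simp [hx] at this
end

section
/- For the set functor F(X) = {•} + C × X × X over a linearly ordered set C, the coalgebra s : C* → F(C*) defined by s(ε) = • and s(c·w) = (c, w_{≤c}, w_{>c}) is recursive; consequently, for the algebra m with m(•) = ε and m(c,w,v) = w ⋆ (c·v) there is a unique function q : C* → C* with q = m ∘ Fq ∘ s, namely Quicksort. -/
/-- The quicksort splitting coalgebra `s : C* → {•} + C × C* × C*`. -/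
def qsplit {α : Type*} [LinearOrder α] :
    List α → Unit ⊕ α × List α × List α
  | [] => Sum.inl ()
  | c :: w => Sum.inr (c, w.filter (fun x => x ≤ c), w.filter (fun x => c < x))

/-- The merge algebra `m : {•} + C × C* × C* → C*`. -/
def qmerge {α : Type*} : Unit ⊕ α × List α × List α → List α
  | Sum.inl _ => []
  | Sum.inr (c, w, v) => w ++ c :: v

/-- Action of the functor `F X = {•} + C × X × X` on a map `h`. -/
def qF {α A B : Type*} (h : A → B) : Unit ⊕ α × A × A → Unit ⊕ α × B × B :=
  Sum.map id (fun p => (p.1, h p.2.1, h p.2.2))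

/-!
A coalgebra `r : X → F X` is recursive as soon as it is well-founded, i.e. the relation
"`y` occurs in `r x`" has no infinite descending chains: the coalgebra-to-algebra morphism into
any algebra is then defined, and forced, by well-founded recursion along that relation. For
quicksort both halves `w_{≤c}` and `w_{>c}` are shorter than `c :: w`, so the length decreases.
-/

universe u v w

section Recursion

variable {α : Type u} {X : Type v}

/-- `r` is a recursive coalgebra, tested against algebras with carrier in universe `w`. -/
def IsQRecursive (r : X → Unit ⊕ α × X × X) : Prop :=
  ∀ (A : Type w) (a : Unit ⊕ α × A × A → A), ∃! h : X → A, ∀ x, h x = a (qF h (r x))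

def QChild (r : X → Unit ⊕ α × X × X) (y x : X) : Prop :=
  ∃ c z, r x = Sum.inr (c, y, z) ∨ r x = Sum.inr (c, z, y)

variable {r : X → Unit ⊕ α × X × X}

theorem isQRecursive_of_wellFounded (hwf : WellFounded (QChild r)) :
    IsQRecursive.{u, v, w} r := by
  intro A a
  let step (x : X) (IH : ∀ y, QChild r y x → A) : A :=
    match hx : r x with
    | Sum.inl () => a (Sum.inl ())
    | Sum.inr (c, y, z) => a (Sum.inr (c, IH y ⟨c, z, Or.inl hx⟩, IH z ⟨c, y, Or.inr hx⟩))
  refine ⟨hwf.fix step, fun x => ?_, fun k hk => funext fun x => ?_⟩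
  · rw [hwf.fix_eq]
    simp only [step]
    split <;> next hx => rw [hx]; rfl
  · induction x using hwf.induction with
    | _ x IH =>
      rw [hk, hwf.fix_eq]
      simp only [step]
      split
      · next hx => rw [hx]; rfl
      · next c y z hx =>
        rw [hx]
        simp only [qF, Sum.map_inr]
        rw [IH y ⟨c, z, Or.inl hx⟩, IH z ⟨c, y, Or.inr hx⟩]

end Recursion

theorem qChild_qsplit_length_lt {α : Type*} [LinearOrder α] {y x : List α}
    (h : QChild qsplit y x) : y.length < x.length := by
  obtain ⟨c, z, hx | hx⟩ := h <;>
  · cases x with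
    | nil => cases hx
    | cons d x =>
      simp only [qsplit, Sum.inr.injEq, Prod.mk.injEq] at hx
      obtain ⟨-, rfl, rfl⟩ := hx
      exact Nat.lt_succ_of_le (List.length_filter_le _ _)

theorem wellFounded_qChild_qsplit {α : Type*} [LinearOrder α] :
    WellFounded (QChild (qsplit (α := α))) :=
  Subrelation.wf qChild_qsplit_length_lt (measure List.length).wf

/-- The quicksort coalgebra `s` is recursive for `F X = {•} + C × X × X`;
consequently there is a unique `q : C* → C*` with `q = m ∘ F q ∘ s` (quicksort). -/
theorem qsplit_recursive {α : Type*} [LinearOrder α] :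
    (∀ (A : Type*) (a : Unit ⊕ α × A × A → A),
      ∃! h : List α → A, ∀ w : List α, h w = a (qF h (qsplit w))) ∧
    (∃! q : List α → List α, ∀ w : List α, q w = qmerge (qF q (qsplit w))) :=
  ⟨isQRecursive_of_wellFounded wellFounded_qChild_qsplit,
    isQRecursive_of_wellFounded wellFounded_qChild_qsplit _ qmerge⟩
end

section
/- Under the same assumptions, if the diagram D : D → F-Coalg is full (as a functor) and each Di has Fil-presentable carrier, then each colimit injection π_i : (X_i, x_i) → (A, α) is the unique coalgebra morphism from (X_i, x_i) to (A, α). -/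
open CategoryTheory CategoryTheory.Limits Opposite

universe u

variable {𝒞 : Type u} [Category.{u} 𝒞]

/-- An object `X` is `Fil`-presentable if its hom-functor preserves colimits of all
diagrams whose scheme lies in `Fil`. -/
def FilPresentable (Fil : Set Cat.{u, u}) (X : 𝒞) : Prop :=
  ∀ J ∈ Fil, ∀ D : J ⥤ 𝒞, Nonempty (PreservesColimit D (coyoneda.obj (op X)))

/-- The canonical slice category `𝒮/X` of arrows into `X` with domain in `𝒮`. -/
abbrev SliceCat (𝒮 : Set 𝒞) (X : 𝒞) : Type u :=
  ObjectProperty.FullSubcategory (fun f : Over X => f.left ∈ 𝒮)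

/-- The canonical diagram `𝒮/X ⥤ 𝒞`, `(S, f) ↦ S`. -/
abbrev canDiag (𝒮 : Set 𝒞) (X : 𝒞) : SliceCat 𝒮 X ⥤ 𝒞 :=
  ObjectProperty.ι _ ⋙ Over.forget X

/-- The canonical cocone over the canonical diagram, with tip `X`. -/
@[simps]
def canCocone (𝒮 : Set 𝒞) (X : 𝒞) : Cocone (canDiag 𝒮 X) where
  pt := X
  ι := { app := fun f => f.obj.hom
         naturality := fun f g h => by simp [Over.w ((ObjectProperty.ι _).map h)] }

/-- A witness that `𝒞` is `Fil`-accessible: a set `Cp` of `Fil`-presentable objects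
such that each canonical slice lies in `Fil` and each object is the colimit of its
canonical diagram. -/
structure FilAccessibleData (Fil : Set Cat.{u, u}) (𝒞 : Type u) [Category.{u} 𝒞] where
  Cp : Set 𝒞
  presentable : ∀ S ∈ Cp, FilPresentable Fil S
  sliceInFil : ∀ X : 𝒞, Cat.of (SliceCat Cp X) ∈ Fil
  canColim : ∀ X : 𝒞, Nonempty (IsColimit (canCocone Cp X))

/-!
Since `Hom(X, -)` preserves the filtered colimit of carriers, a coalgebra morphism
`h : (X, x) ⟶ (A, α)` factors in `𝒞` as `u ≫ π_k`. The square of `u` need not commute, but its two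
sides agree after `F π_k`; as `F` preserves the colimit and `Hom(X, -)` preserves its image, they
already agree after `F (D t)` for some `t : k ⟶ m`. Thus `u ≫ D t` is a coalgebra morphism into
`D m` through which `h` factors, and fullness makes it `D g`, so `h = D g ≫ π_m = π_i`.
-/

universe v w

section PreservesColimitCoyoneda

variable {C : Type*} [Category.{v} C] {J : Type w} [Category J] {G : J ⥤ C} {c : Cocone G}
  {X : C} [PreservesColimit G (coyoneda.obj (op X))]

theorem exists_hom_comp_ι_eq_of_preservesColimit_coyoneda (hc : IsColimit c) (f : X ⟶ c.pt) :
    ∃ (k : J) (u : X ⟶ G.obj k), u ≫ c.ι.app k = f :=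
  Types.jointly_surjective_of_isColimit (isColimitOfPreserves (coyoneda.obj (op X)) hc) f

theorem exists_comp_map_eq_of_preservesColimit_coyoneda [IsFiltered J] (hc : IsColimit c)
    {k : J} (a b : X ⟶ G.obj k) (hab : a ≫ c.ι.app k = b ≫ c.ι.app k) :
    ∃ (m : J) (t : k ⟶ m), a ≫ G.map t = b ≫ G.map t :=
  (Types.FilteredColimit.isColimit_eq_iff' (isColimitOfPreserves (coyoneda.obj (op X)) hc)
    a b).mp hab

end PreservesColimitCoyoneda

namespace CategoryTheory.Endofunctor.Coalgebra

variable {C : Type*} [Category.{v} C] {F : C ⥤ C} {J : Type w} [Category J] [IsFiltered J]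
  {D : J ⥤ Coalgebra F} {c : Cocone D} {Y : Coalgebra F}
  [PreservesColimit (D ⋙ forget F) (coyoneda.obj (op Y.V))]
  [PreservesColimit ((D ⋙ forget F) ⋙ F) (coyoneda.obj (op Y.V))]

theorem exists_hom_comp_ι_eq_of_isColimit_forget (hc : IsColimit ((forget F).mapCocone c))
    (hFc : IsColimit (F.mapCocone ((forget F).mapCocone c))) (h : Y ⟶ c.pt) :
    ∃ (m : J) (v : Y ⟶ D.obj m), v ≫ c.ι.app m = h := by
  obtain ⟨k, (u : Y.V ⟶ (D.obj k).V), hu⟩ :=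
    exists_hom_comp_ι_eq_of_preservesColimit_coyoneda hc h.f
  change u ≫ (c.ι.app k).f = h.f at hu
  have square_after_colimit : (u ≫ (D.obj k).str) ≫ F.map (c.ι.app k).f =
      (Y.str ≫ F.map u) ≫ F.map (c.ι.app k).f := by
    calc (u ≫ (D.obj k).str) ≫ F.map (c.ι.app k).f = h.f ≫ c.pt.str := by
          rw [Category.assoc, (c.ι.app k).h, ← Category.assoc, hu]; rfl
      _ = Y.str ≫ F.map h.f := h.h.symm
      _ = (Y.str ≫ F.map u) ≫ F.map (c.ι.app k).f := by rw [← hu, F.map_comp, Category.assoc]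
  obtain ⟨m, t, ht⟩ :=
    exists_comp_map_eq_of_preservesColimit_coyoneda hFc _ _ square_after_colimit
  change (u ≫ (D.obj k).str) ≫ F.map (D.map t).f = (Y.str ≫ F.map u) ≫ F.map (D.map t).f at ht
  refine ⟨m, ⟨u ≫ (D.map t).f, ?_⟩, ?_⟩
  · rw [F.map_comp, ← Category.assoc, ← ht, Category.assoc, (D.map t).h, Category.assoc]
  · ext
    rw [← hu, ← c.w t, comp_f]
    exact Category.assoc _ _ _

end CategoryTheory.Endofunctor.Coalgebra

theorem unique_colimit_injection_general
    (Fil : Set Cat.{u, u}) (hFil : ∀ J ∈ Fil, IsFiltered J)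
    (F : 𝒞 ⥤ 𝒞)
    (J : Cat.{u, u}) (hJ : J ∈ Fil)
    (D : J ⥤ Endofunctor.Coalgebra F) (hfull : D.Full)
    (hpres : ∀ i : J, FilPresentable Fil (D.obj i).V)
    (cc : Cocone D)
    (hcreate : IsColimit ((Endofunctor.Coalgebra.forget F).mapCocone cc))
    (hFpres : IsColimit (F.mapCocone ((Endofunctor.Coalgebra.forget F).mapCocone cc)))
    (i : J) (h : D.obj i ⟶ cc.pt) :
    h = cc.ι.app i := by
  have : IsFiltered J := hFil J hJ
  have := (hpres i J hJ (D ⋙ Endofunctor.Coalgebra.forget F)).some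
  have := (hpres i J hJ ((D ⋙ Endofunctor.Coalgebra.forget F) ⋙ F)).some
  obtain ⟨m, v, rfl⟩ :=
    Endofunctor.Coalgebra.exists_hom_comp_ι_eq_of_isColimit_forget hcreate hFpres h
  obtain ⟨g, rfl⟩ := hfull.map_surjective v
  exact cc.w g

/-- If moreover the diagram `D : J ⥤ F-Coalg` is full and each `D i` has
`Fil`-presentable carrier, then each colimit injection `π_i` is the unique coalgebra
morphism from `D i` to the colimit coalgebra `(A, α)`. -/
theorem unique_colimit_injection
    (Fil : Set Cat.{u, u}) (hFil : ∀ J ∈ Fil, IsFiltered J)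
    (acc : FilAccessibleData Fil 𝒞) (F : 𝒞 ⥤ 𝒞)
    (J : Cat.{u, u}) (hJ : J ∈ Fil)
    (D : J ⥤ Endofunctor.Coalgebra F) (hfull : D.Full)
    (hpres : ∀ i : J, FilPresentable Fil (D.obj i).V)
    (cc : Cocone D)
    (hcreate : IsColimit ((Endofunctor.Coalgebra.forget F).mapCocone cc))
    (hFpres : IsColimit (F.mapCocone ((Endofunctor.Coalgebra.forget F).mapCocone cc)))
    (i : J) (h : D.obj i ⟶ cc.pt) :
    h = cc.ι.app i :=
  unique_colimit_injection_general Fil hFil F J hJ D hfull hpres cc hcreate hFpres i h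
end
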